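/- If G is a graph and α ∈ [1/2, 1], then the number of eigenvalues of A_α(G) in the interval [0, α), counted with multiplicity, is at most the domination number γ(G). -/

import Mathlib

/-- The `A_α`-matrix of a graph: `α·D(G) + (1-α)·A(G)`. -/
noncomputable def Aalpha {n : ℕ} (α : ℝ) (G : SimpleGraph (Fin n)) [DecidableRel G.Adj] :
    Matrix (Fin n) (Fin n) ℝ :=
  α • Matrix.diagonal (fun v => (G.degree v : ℝ)) + (1 - α) • G.adjMatrix ℝ

lemma Aalpha_isHermitian {n : ℕ} (α : ℝ) (G : SimpleGraph (Fin n)) [DecidableRel G.Adj] :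
    (Aalpha α G).IsHermitian := by
  apply Matrix.IsHermitian.ext
  intro i j
  by_cases h : G.Adj i j <;> by_cases hij : i = j <;>
    simp_all [Aalpha, Matrix.diagonal_apply, SimpleGraph.adj_comm, eq_comm]


/-- `D` is a dominating set of `G`. -/
def IsDomSet {n : ℕ} (G : SimpleGraph (Fin n)) (D : Finset (Fin n)) : Prop :=
  ∀ v : Fin n, v ∈ D ∨ ∃ u ∈ D, G.Adj u v

/-!
Let `D` be a minimum dominating set and `U` the space of vectors vanishing on `D`, of dimension at
least `n - γ`. Written as a sum over edges `uv` of `α (x_u² + x_v²) + 2 (1 - α) x_u x_v`, the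
quadratic form of `A_α` has nonnegative terms for `α ∈ [1/2, 1]`; for `x ∈ U` every vertex `v ∉ D`
has an edge into `D`, contributing `α x_v²`, so the form is at least `α ‖x‖²` on `U`. It is below
`α ‖x‖²` on the nonzero vectors of the span of the eigenvectors with eigenvalue `< α`. The two
subspaces meet trivially, so there are at most `n - dim U ≤ γ` such eigenvalues.
-/

open Matrix Finset

namespace Orthonormal

variable {ι κ : Type*} [Fintype ι] {v : κ → EuclideanSpace ℝ ι}

theorem dotProduct_sum_smul (hv : Orthonormal ℝ v) (s : Finset κ) (a b : κ → ℝ) :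
    (∑ i ∈ s, a i • ⇑(v i)) ⬝ᵥ (∑ i ∈ s, b i • ⇑(v i)) = ∑ i ∈ s, a i * b i := by
  have h := hv.inner_sum b a s
  simp only [EuclideanSpace.inner_eq_star_dotProduct, WithLp.ofLp_sum, WithLp.ofLp_smul,
    star_trivial, conj_trivial] at h
  rw [h]
  exact sum_congr rfl fun i _ => mul_comm _ _

end Orthonormal

namespace Matrix.IsHermitian

variable {ι : Type*} [Fintype ι] [DecidableEq ι] {A : Matrix ι ι ℝ} (hA : A.IsHermitian)

theorem finrank_span_eigenvectorBasis (S : Finset ι) :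
    Module.finrank ℝ (Submodule.span ℝ (Set.range fun i : S => ⇑(hA.eigenvectorBasis i))) =
      S.card := by
  have hli : LinearIndependent ℝ fun i : S => ⇑(hA.eigenvectorBasis i) :=
    (hA.eigenvectorBasis.orthonormal.linearIndependent.map'
      (WithLp.linearEquiv 2 ℝ (ι → ℝ)).toLinearMap (LinearEquiv.ker _)).comp
      Subtype.val Subtype.val_injective
  rw [finrank_span_eq_card hli, Fintype.card_coe]

theorem dotProduct_mulVec_lt_of_mem_span_eigenvectorBasis {c : ℝ} {S : Finset ι}
    (hS : ∀ i ∈ S, hA.eigenvalues i < c) {x : ι → ℝ}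
    (hx : x ∈ Submodule.span ℝ (Set.range fun i : S => ⇑(hA.eigenvectorBasis i)))
    (hx0 : x ≠ 0) : x ⬝ᵥ A *ᵥ x < c * (x ⬝ᵥ x) := by
  obtain ⟨a, rfl⟩ := (Submodule.mem_span_range_iff_exists_fun ℝ).mp hx
  have hB : Orthonormal ℝ fun i : S => hA.eigenvectorBasis i :=
    hA.eigenvectorBasis.orthonormal.comp _ Subtype.val_injective
  have hAx : A *ᵥ ∑ i, a i • ⇑(hA.eigenvectorBasis i) =
      ∑ i : S, (hA.eigenvalues i * a i) • ⇑(hA.eigenvectorBasis i) := by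
    simp only [mulVec_sum, mulVec_smul, hA.mulVec_eigenvectorBasis, smul_smul, mul_comm]
  obtain ⟨i₀, hi₀⟩ : ∃ i, a i ≠ 0 := by
    by_contra! h
    exact hx0 (by simp [h])
  rw [hAx, hB.dotProduct_sum_smul, hB.dotProduct_sum_smul, mul_sum]
  refine sum_lt_sum (fun i _ => ?_) ⟨i₀, mem_univ _, ?_⟩
  · nlinarith [hS i i.2, sq_nonneg (a i)]
  · nlinarith [hS i₀ i₀.2, sq_pos_of_ne_zero hi₀]

theorem card_eigenvalues_lt_add_finrank_le {c : ℝ} (U : Submodule ℝ (ι → ℝ))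
    (hU : ∀ x ∈ U, c * (x ⬝ᵥ x) ≤ x ⬝ᵥ A *ᵥ x) :
    #{i | hA.eigenvalues i < c} + Module.finrank ℝ U ≤ Fintype.card ι := by
  set S : Finset ι := {i | hA.eigenvalues i < c}
  have hdisj : Disjoint
      (Submodule.span ℝ (Set.range fun i : S => ⇑(hA.eigenvectorBasis i))) U := by
    refine Submodule.disjoint_def.mpr fun x hxW hxU => ?_
    by_contra hx0
    have := hA.dotProduct_mulVec_lt_of_mem_span_eigenvectorBasis
      (fun i hi => (mem_filter.mp hi).2) hxW hx0
    linarith [hU x hxU]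
  have := Submodule.finrank_add_finrank_le_of_disjoint hdisj
  rwa [hA.finrank_span_eigenvectorBasis, Module.finrank_fintype_fun_eq_card] at this

end Matrix.IsHermitian

theorem two_mul_dotProduct_Aalpha_mulVec {n : ℕ} (α : ℝ) (G : SimpleGraph (Fin n))
    [DecidableRel G.Adj] (x : Fin n → ℝ) :
    2 * (x ⬝ᵥ Aalpha α G *ᵥ x) = ∑ i, ∑ j,
      if G.Adj i j then α * (x i ^ 2 + x j ^ 2) + 2 * (1 - α) * (x i * x j) else 0 := by
  have hdeg : x ⬝ᵥ diagonal (fun v => (G.degree v : ℝ)) *ᵥ x =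
      ∑ i, ∑ j, if G.Adj i j then x i ^ 2 else 0 := by
    simp only [dotProduct, mulVec_diagonal, G.degree_eq_sum_if_adj, mul_sum, sum_mul]
    refine sum_congr rfl fun i _ => sum_congr rfl fun j _ => ?_
    split_ifs <;> ring
  have hdeg' : ∑ i, ∑ j, (if G.Adj i j then x i ^ 2 else 0) =
      ∑ i, ∑ j, if G.Adj i j then x j ^ 2 else 0 := by
    rw [sum_comm]
    simp only [G.adj_comm]
  have hsplit : (∑ i, ∑ j,
      if G.Adj i j then α * (x i ^ 2 + x j ^ 2) + 2 * (1 - α) * (x i * x j) else 0) =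
      α * (∑ i, ∑ j, if G.Adj i j then x i ^ 2 else 0) +
        α * (∑ i, ∑ j, if G.Adj i j then x j ^ 2 else 0) +
          2 * (1 - α) * ∑ i, ∑ j, if G.Adj i j then x i * x j else 0 := by
    simp only [mul_sum, ← sum_add_distrib]
    refine sum_congr rfl fun i _ => sum_congr rfl fun j _ => ?_
    split_ifs <;> ring
  rw [hsplit, ← hdeg', Aalpha, add_mulVec, dotProduct_add, smul_mulVec, dotProduct_smul,
    smul_mulVec, dotProduct_smul, G.dotProduct_mulVec_adjMatrix, smul_eq_mul, smul_eq_mul, hdeg]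
  ring

namespace IsDomSet

variable {n : ℕ} {G : SimpleGraph (Fin n)} [DecidableRel G.Adj] {D : Finset (Fin n)}
  {x : Fin n → ℝ}

theorem dotProduct_self_le_sum_adj_mem (hD : IsDomSet G D) (hx : ∀ v ∈ D, x v = 0) :
    x ⬝ᵥ x ≤ ∑ i, ∑ j, if G.Adj i j ∧ j ∈ D then x i ^ 2 else 0 := by
  refine sum_le_sum fun i _ => ?_
  have hnonneg : ∀ j ∈ univ, 0 ≤ if G.Adj i j ∧ j ∈ D then x i ^ 2 else 0 :=
    fun j _ => by positivity
  rcases hD i with hi | ⟨u, hu, hui⟩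
  · simp [hx i hi]
  · simpa [← sq, hui.symm, hu] using single_le_sum hnonneg (mem_univ u)

theorem mul_dotProduct_le_dotProduct_Aalpha_mulVec {α : ℝ} (hα0 : 1 / 2 ≤ α) (hα1 : α ≤ 1)
    (hD : IsDomSet G D) (hx : ∀ v ∈ D, x v = 0) :
    α * (x ⬝ᵥ x) ≤ x ⬝ᵥ Aalpha α G *ᵥ x := by
  have hpair : ∀ i j, α * ((if G.Adj i j ∧ j ∈ D then x i ^ 2 else 0) +
      (if G.Adj i j ∧ i ∈ D then x j ^ 2 else 0)) ≤
      if G.Adj i j then α * (x i ^ 2 + x j ^ 2) + 2 * (1 - α) * (x i * x j) else 0 := by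
    intro i j
    -- `α (a² + b²) + 2 (1 - α) a b = (1 - α) (a + b)² + (2α - 1) (a² + b²)`
    by_cases hij : G.Adj i j <;> by_cases hi : i ∈ D <;> by_cases hj : j ∈ D <;>
      simp [hij, hi, hj, hx i, hx j]
    nlinarith [mul_nonneg (sub_nonneg.mpr hα1) (sq_nonneg (x i + x j)),
      mul_nonneg (sub_nonneg.mpr hα0) (add_nonneg (sq_nonneg (x i)) (sq_nonneg (x j)))]
  have hsymm : (∑ i, ∑ j, if G.Adj i j ∧ i ∈ D then x j ^ 2 else 0) =
      ∑ i, ∑ j, if G.Adj i j ∧ j ∈ D then x i ^ 2 else 0 := by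
    rw [sum_comm]
    simp only [G.adj_comm]
  have hsum := sum_le_sum fun i (_ : i ∈ univ) => sum_le_sum fun j (_ : j ∈ univ) => hpair i j
  simp only [← mul_sum, sum_add_distrib, hsymm, ← two_mul_dotProduct_Aalpha_mulVec] at hsum
  have := mul_le_mul_of_nonneg_left (hD.dotProduct_self_le_sum_adj_mem hx) (by linarith : 0 ≤ α)
  linarith

end IsDomSet

theorem card_le_finrank_ker_funLeft_add_card {K ι : Type*} [Field K] [Fintype ι]
    (D : Finset ι) :
    Fintype.card ι ≤ Module.finrank K (LinearMap.ker (LinearMap.funLeft K K ((↑) : D → ι))) +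
      D.card := by
  have hrank := LinearMap.finrank_range_add_finrank_ker (LinearMap.funLeft K K ((↑) : D → ι))
  have hrange := Submodule.finrank_le (LinearMap.range (LinearMap.funLeft K K ((↑) : D → ι)))
  rw [Module.finrank_fintype_fun_eq_card] at hrank hrange
  rw [Fintype.card_coe] at hrange
  omega

open Finset in
theorem Aalpha_count_le_domination (n : ℕ) (G : SimpleGraph (Fin n)) [DecidableRel G.Adj]
    (α : ℝ) (hα0 : 1 / 2 ≤ α) (hα1 : α ≤ 1)
    (γ : ℕ) (hγ : IsLeast {k | ∃ D : Finset (Fin n), IsDomSet G D ∧ D.card = k} γ) :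
    (univ.filter fun i : Fin n =>
        0 ≤ (Aalpha_isHermitian α G).eigenvalues i ∧
          (Aalpha_isHermitian α G).eigenvalues i < α).card ≤ γ := by
  obtain ⟨D, hD, rfl⟩ := hγ.1
  set hA := Aalpha_isHermitian α G
  set U := LinearMap.ker (LinearMap.funLeft ℝ ℝ ((↑) : D → Fin n))
  have hU : ∀ x ∈ U, α * (x ⬝ᵥ x) ≤ x ⬝ᵥ Aalpha α G *ᵥ x := fun x hx =>
    hD.mul_dotProduct_le_dotProduct_Aalpha_mulVec hα0 hα1 fun v hv =>
      congr_fun (LinearMap.mem_ker.mp hx) ⟨v, hv⟩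
  have hcount := hA.card_eigenvalues_lt_add_finrank_le U hU
  have hdim : n ≤ Module.finrank ℝ U + #D := by
    simpa using card_le_finrank_ker_funLeft_add_card (K := ℝ) D
  have hsub : (univ.filter fun i => 0 ≤ hA.eigenvalues i ∧ hA.eigenvalues i < α).card ≤
      #{i | hA.eigenvalues i < α} :=
    card_le_card fun i hi => by simp_all
  rw [Fintype.card_fin] at hcount
  omega
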